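/- Let r be an equilibrium price vector satisfying detailed balance in a connected circulation-free CES market with δ > 0 and all coefficients C_{ij} normalized so that min over nonzero entries in each row is 1. Then for any two adjacent participants i ~ j, r_i/r_j ≤ γ, where γ = max_i Σ_j C_{ij}. -/
import Mathlib


open Finset

/-- `l` is a walk in the support graph of `C`. -/
def isWalk {n : ℕ} (C : Matrix (Fin n) (Fin n) ℝ) (l : List (Fin n)) : Prop :=
  l.Chain' fun a b => 0 < C a b

theorem adjacent_price_ratio_bound {n : ℕ} (hn : 2 ≤ n)
    (C : Matrix (Fin n) (Fin n) ℝ) (δ : ℝ) (hδ : 0 < δ)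
    (hCnn : ∀ i j, 0 ≤ C i j)
    (hCsupp : ∀ i j, 0 < C i j ↔ 0 < C j i)
    -- row-minimum normalization: nonzero entries are ≥ 1 and some entry equals 1
    (hnorm : ∀ i, (∀ j, C i j ≠ 0 → 1 ≤ C i j) ∧ ∃ j, C i j = 1)
    -- connectedness
    (hconn : ∀ i j : Fin n, Relation.ReflTransGen (fun a b => 0 < C a b) i j)
    -- circulation-free
    (hcirc : ∀ l : List (Fin n), l ≠ [] → isWalk C l → l.head? = l.getLast? →
      ((l.zip l.tail).map fun p => C p.1 p.2).prod
        = ((l.zip l.tail).map fun p => C p.2 p.1).prod)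
    (r : Fin n → ℝ) (hr : ∀ i, 0 < r i)
    (R : Fin n → ℝ) (hR : ∀ i, R i = ∑ k, C i k / r k ^ δ)
    -- detailed balance
    (hdb : ∀ i j, r i ^ (1 + δ) * C i j / R i = r j ^ (1 + δ) * C j i / R j)
    (γ : ℝ)
    (hγ : γ = Finset.univ.sup' ⟨(⟨0, by omega⟩ : Fin n), Finset.mem_univ _⟩ fun i => ∑ j, C i j) :
    ∀ i j, 0 < C i j → r i / r j ≤ γ := by
  intro i j hij
  -- pick j' minimizing r among neighbors of i
  obtain ⟨j', hj'S, hj'min⟩ :=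
    Finset.exists_min_image (Finset.univ.filter fun k => 0 < C i k) r
      ⟨j, by simp [hij]⟩
  simp only [Finset.mem_filter, Finset.mem_univ, true_and] at hj'S
  have hji' : 0 < C j' i := (hCsupp i j').mp hj'S
  have hrjj' : r j' ≤ r j := hj'min j (by simp [hij])
  have hRipos : 0 < R i := by
    rw [hR]
    refine Finset.sum_pos' (fun k _ => ?_) ⟨j, Finset.mem_univ j, ?_⟩
    · exact div_nonneg (hCnn i k) (Real.rpow_pos_of_pos (hr k) δ).le
    · exact div_pos hij (Real.rpow_pos_of_pos (hr j) δ)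
  have hRj'pos : 0 < R j' := by
    rw [hR]
    refine Finset.sum_pos' (fun k _ => ?_) ⟨i, Finset.mem_univ i, ?_⟩
    · exact div_nonneg (hCnn j' k) (Real.rpow_pos_of_pos (hr k) δ).le
    · exact div_pos hji' (Real.rpow_pos_of_pos (hr i) δ)
  have hγsum : (∑ k, C i k) ≤ γ := by
    rw [hγ]; exact Finset.le_sup' (fun i => ∑ j, C i j) (Finset.mem_univ i)
  have hγpos : 0 < γ := lt_of_lt_of_le (by
    have : C i j ≤ ∑ k, C i k :=
      Finset.single_le_sum (f := fun k => C i k) (fun k _ => hCnn i k) (Finset.mem_univ j)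
    linarith) hγsum
  have hRi : R i ≤ γ / r j' ^ δ := by
    rw [hR]
    calc ∑ k, C i k / r k ^ δ ≤ ∑ k, C i k / r j' ^ δ := by
          apply Finset.sum_le_sum
          intro k _
          rcases eq_or_lt_of_le (hCnn i k) with h | h
          · rw [← h]; simp
          · have hrk : r j' ≤ r k := hj'min k (by simp [h])
            have : r j' ^ δ ≤ r k ^ δ :=
              Real.rpow_le_rpow (le_of_lt (hr j')) hrk (le_of_lt hδ)
            exact div_le_div_of_nonneg_left (hCnn i k) (Real.rpow_pos_of_pos (hr j') δ) this
      _ = (∑ k, C i k) / r j' ^ δ := by rw [Finset.sum_div]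
      _ ≤ γ / r j' ^ δ := by
          have hj'p := hr j'
          gcongr
  -- single-term lower bound for R j'
  have hRj'lb : C j' i / r i ^ δ ≤ R j' := by
    rw [hR]
    exact Finset.single_le_sum (f := fun k => C j' k / r k ^ δ)
      (fun k _ => div_nonneg (hCnn j' k) (Real.rpow_pos_of_pos (hr k) δ).le) (Finset.mem_univ i)
  have hfrac : C j' i / R j' ≤ r i ^ δ := by
    have hip : (0:ℝ) < r i ^ δ := Real.rpow_pos_of_pos (hr i) δ
    rw [div_le_iff₀ hRj'pos]
    calc C j' i = (C j' i / r i ^ δ) * r i ^ δ := (div_mul_cancel₀ _ (ne_of_gt hip)).symm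
      _ ≤ R j' * r i ^ δ := mul_le_mul_of_nonneg_right hRj'lb hip.le
      _ = r i ^ δ * R j' := mul_comm _ _
  -- detailed balance at (i, j')
  have key := hdb i j'
  have hC1 : 1 ≤ C i j' := (hnorm i).1 j' (ne_of_gt hj'S)
  have hstep : r i ^ (1 + δ) ≤ γ * r j' * r i ^ δ := by
    calc r i ^ (1 + δ) ≤ r i ^ (1 + δ) * C i j' :=
          le_mul_of_one_le_right (Real.rpow_pos_of_pos (hr i) (1+δ)).le hC1
      _ = R i * (r j' ^ (1 + δ) * C j' i / R j') := by
          rw [← div_mul_cancel₀ (r i ^ (1 + δ) * C i j') (ne_of_gt hRipos), key]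
          ring
      _ ≤ (γ / r j' ^ δ) * (r j' ^ (1 + δ) * r i ^ δ) := by
          have h1 : r j' ^ (1 + δ) * C j' i / R j' ≤ r j' ^ (1 + δ) * r i ^ δ := by
            rw [mul_div_assoc]
            exact mul_le_mul_of_nonneg_left hfrac (Real.rpow_pos_of_pos (hr j') (1+δ)).le
          have h2 : 0 ≤ r j' ^ (1 + δ) * r i ^ δ :=
            mul_nonneg (Real.rpow_pos_of_pos (hr j') (1+δ)).le (Real.rpow_pos_of_pos (hr i) δ).le
          calc R i * (r j' ^ (1 + δ) * C j' i / R j')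
              ≤ R i * (r j' ^ (1 + δ) * r i ^ δ) :=
                mul_le_mul_of_nonneg_left h1 (le_of_lt hRipos)
            _ ≤ (γ / r j' ^ δ) * (r j' ^ (1 + δ) * r i ^ δ) :=
                mul_le_mul_of_nonneg_right hRi h2
      _ = γ * r j' * r i ^ δ := by
          have : r j' ^ (1 + δ) = r j' * r j' ^ δ := by
            rw [Real.rpow_add (hr j'), Real.rpow_one]
          rw [this]
          have hpos : (0:ℝ) < r j' ^ δ := Real.rpow_pos_of_pos (hr j') δ
          field_simp
  have hsplit : r i ^ (1 + δ) = r i * r i ^ δ := by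
    rw [Real.rpow_add (hr i), Real.rpow_one]
  rw [hsplit] at hstep
  have hri : r i ≤ γ * r j' :=
    le_of_mul_le_mul_right hstep (Real.rpow_pos_of_pos (hr i) δ)
  have : r i ≤ γ * r j := hri.trans (by nlinarith [hr j'])
  rw [div_le_iff₀ (hr j)]
  exact this
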